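/- Let A(x) = A₀ + Σ_k x_k B_k with A₀, B_k Hermitian, and let S_min be the eigenspace of λ_min(A(x₀)). Then the subdifferential at x₀ of the concave function x ↦ λ_min(A(x)), taken as the subdifferential of the convex function −λ_min(A(x)) with a sign, satisfies ∂(λ_min ∘ A)(x₀) = −m_{S_min} in the sense that ∂((−λ_min) ∘ A)(x₀) = m'_{S_min} where m'_{S_min} = conv{(−⟨B_1 v, v⟩,…,−⟨B_t v, v⟩) : v ∈ S_min, ‖v‖ = 1}. -/

import Mathlib

/-!
By Rayleigh–Ritz, `-λ_min(A x)` is the largest of the numbers `-⟪A(x) v, v⟫` over unit vectors `v`,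
and each of them is affine in `x`, with slope `β v = (-⟪B_k v, v⟫)_k`; at `x₀` the maximum is
attained exactly on the unit vectors of `S_min`. For a maximum of affine functions indexed by a
compact set, the subdifferential is the convex hull of the slopes of the active functions
(Danskin–Valadier). Active slopes are subgradients. Conversely, the maximisers at `x₀ + d/(m+1)`
accumulate at an active `v` whose slope beats a given subgradient `u` in the direction `d`; as the
hull is compact, `u` cannot then be separated from it.
-/

open Matrix
open scoped Matrix ComplexOrder

/-- The smallest eigenvalue of a matrix, as the infimum of its real
eigenvalues. -/
noncomputable def lambdaMin {n : ℕ} (A : Matrix (Fin n) (Fin n) ℂ) : ℝ :=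
  sInf {r : ℝ | Module.End.HasEigenvalue (Matrix.toEuclideanLin A) (r : ℂ)}

/-- The subdifferential of `f : ℝᵗ → ℝ` at `x₀`. -/
def subdiff {t : ℕ} (f : (Fin t → ℝ) → ℝ) (x₀ : Fin t → ℝ) : Set (Fin t → ℝ) :=
  {v | ∀ y, f y - f x₀ ≥ ∑ k, v k * (y k - x₀ k)}

open Set Filter Topology Module.End
open scoped InnerProductSpace

theorem isCompact_convexHull {E : Type*} [NormedAddCommGroup E] [NormedSpace ℝ E]
    [FiniteDimensional ℝ E] {s : Set E} (hs : IsCompact s) : IsCompact (convexHull ℝ s) := by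
  rcases s.eq_empty_or_nonempty with rfl | ⟨p, hp⟩
  · simp
  set m := Module.finrank ℝ E + 1
  let combine : (Fin m → ℝ) × (Fin m → E) → E := fun c => ∑ i, c.1 i • c.2 i
  suffices convexHull ℝ s = combine '' (stdSimplex ℝ (Fin m) ×ˢ univ.pi fun _ => s) from
    this ▸ ((isCompact_stdSimplex ℝ _).prod (isCompact_univ_pi fun _ => hs)).image
      (by fun_prop)
  refine Subset.antisymm (fun x hx => ?_) ?_
  · -- Carathéodory: at most `finrank + 1` points are needed; pad the combination with zeros.
    obtain ⟨ι, _, z, w, hzs, hz, hw0, hw1, rfl⟩ := eq_pos_convex_span_of_mem_convexHull hx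
    have hcard : Fintype.card ι ≤ m :=
      hz.card_le_finrank_succ.trans (Nat.succ_le_succ (Submodule.finrank_le _))
    obtain ⟨e⟩ := Function.Embedding.nonempty_of_card_le (hcard.trans (Fintype.card_fin m).ge)
    classical
    refine ⟨(Function.extend e w 0, Function.extend e z fun _ => p), ⟨⟨fun j => ?_, ?_⟩, ?_⟩, ?_⟩
    · rcases em (∃ i, e i = j) with ⟨i, rfl⟩ | hj
      · simpa [e.injective.extend_apply] using (hw0 i).le
      · simp [Function.extend_apply' _ _ _ hj]
    · rw [← hw1]
      refine (Fintype.sum_of_injective e e.injective _ _ (fun j hj => ?_) fun i => ?_).symm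
      · simp [Function.extend_apply' _ _ _ (by simpa using hj)]
      · simp [e.injective.extend_apply]
    · intro j _
      rcases em (∃ i, e i = j) with ⟨i, rfl⟩ | hj
      · simpa [e.injective.extend_apply] using hzs (mem_range_self i)
      · simpa [Function.extend_apply' _ _ _ hj] using hp
    · refine (Fintype.sum_of_injective e e.injective _ _ (fun j hj => ?_) fun i => ?_).symm
      · simp [Function.extend_apply' _ _ _ (by simpa using hj)]
      · simp [e.injective.extend_apply]
  · rintro _ ⟨⟨a, z⟩, ⟨⟨ha0, ha1⟩, hz⟩, rfl⟩
    exact (convex_convexHull ℝ s).sum_mem (fun i _ => ha0 i) ha1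
      fun i _ => subset_convexHull ℝ s (hz i (mem_univ i))

theorem mem_convexHull_of_forall_exists_le {E : Type*} [NormedAddCommGroup E] [NormedSpace ℝ E]
    [FiniteDimensional ℝ E] {s : Set E} (hs : IsCompact s) {u : E}
    (h : ∀ φ : StrongDual ℝ E, ∃ w ∈ s, φ u ≤ φ w) : u ∈ convexHull ℝ s := by
  by_contra hu
  obtain ⟨φ, c, hlt, hgt⟩ :=
    geometric_hahn_banach_closed_point (convex_convexHull ℝ s) (isCompact_convexHull hs).isClosed hu
  obtain ⟨w, hw, hle⟩ := h φ
  exact lt_asymm (hgt.trans_le hle) (hlt w (subset_convexHull ℝ s hw))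

theorem strongDual_apply_eq_dotProduct {t : ℕ} (φ : StrongDual ℝ (Fin t → ℝ)) (y : Fin t → ℝ) :
    φ y = y ⬝ᵥ fun k => φ (Pi.single k 1) := by
  refine (φ.toLinearMap.pi_apply_eq_sum_univ y).trans (Finset.sum_congr rfl fun k _ => ?_)
  simp [← Pi.single_apply, Pi.single_comm]

theorem IsLeast.isGreatest_neg_image {X α : Type*} [AddCommGroup α] [PartialOrder α]
    [IsOrderedAddMonoid α] {g : X → α} {K : Set X} {a : α} (h : IsLeast (g '' K) a) :
    IsGreatest ((fun v => -g v) '' K) (-a) := by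
  obtain ⟨⟨v, hv, rfl⟩, hle⟩ := h
  exact ⟨⟨v, hv, rfl⟩, by rintro _ ⟨w, hw, rfl⟩; exact neg_le_neg (hle ⟨w, hw, rfl⟩)⟩

section Subdifferential

variable {t : ℕ} {f : (Fin t → ℝ) → ℝ} {x₀ : Fin t → ℝ}

theorem mem_subdiff_iff {u : Fin t → ℝ} : u ∈ subdiff f x₀ ↔ ∀ y, u ⬝ᵥ (y - x₀) ≤ f y - f x₀ :=
  Iff.rfl

theorem convex_subdiff : Convex ℝ (subdiff f x₀) := by
  intro p hp q hq a b ha hb hab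
  refine mem_subdiff_iff.2 fun y => ?_
  calc (a • p + b • q) ⬝ᵥ (y - x₀) = a * (p ⬝ᵥ (y - x₀)) + b * (q ⬝ᵥ (y - x₀)) := by
        simp only [add_dotProduct, smul_dotProduct, smul_eq_mul]
    _ ≤ a * (f y - f x₀) + b * (f y - f x₀) := by
        gcongr
        exacts [mem_subdiff_iff.1 hp y, mem_subdiff_iff.1 hq y]
    _ = f y - f x₀ := by rw [← add_mul, hab, one_mul]

theorem mem_subdiff_of_forall_le_of_eq {a : ℝ} {b : Fin t → ℝ}
    (hle : ∀ y, a + y ⬝ᵥ b ≤ f y) (heq : a + x₀ ⬝ᵥ b = f x₀) : b ∈ subdiff f x₀ :=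
  mem_subdiff_iff.2 fun y => by
    rw [dotProduct_comm, sub_dotProduct]
    linarith [hle y]

end Subdifferential

section Danskin

variable {t : ℕ} {X : Type*} [TopologicalSpace X] {K : Set X} {α : X → ℝ} {β : X → Fin t → ℝ}
  {f : (Fin t → ℝ) → ℝ}

theorem exists_mem_active_dotProduct_le_of_mem_subdiff [FirstCountableTopology X]
    (hK : IsCompact K) (hα : Continuous α) (hβ : Continuous β)
    (hf : ∀ x, IsGreatest ((fun v => α v + x ⬝ᵥ β v) '' K) (f x)) {x₀ u : Fin t → ℝ}
    (hu : u ∈ subdiff f x₀) (d : Fin t → ℝ) :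
    ∃ v ∈ K, α v + x₀ ⬝ᵥ β v = f x₀ ∧ u ⬝ᵥ d ≤ β v ⬝ᵥ d := by
  set s : ℕ → ℝ := fun m => 1 / ((m : ℝ) + 1)
  have hs : ∀ m, 0 < s m := fun m => by positivity
  choose v hvK hv using fun m => (hf (x₀ + s m • d)).1
  have hbound : ∀ m, α (v m) + x₀ ⬝ᵥ β (v m) ≤ f x₀ := fun m => (hf x₀).2 ⟨v m, hvK m, rfl⟩
  have hsub : ∀ m, s m * (u ⬝ᵥ d) ≤ α (v m) + x₀ ⬝ᵥ β (v m) + s m * (β (v m) ⬝ᵥ d) - f x₀ :=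
    fun m => by
      have := mem_subdiff_iff.1 hu (x₀ + s m • d)
      rw [← hv m] at this
      simpa [add_dotProduct, smul_dotProduct, dotProduct_comm d, add_assoc] using this
  have hdir : ∀ m, u ⬝ᵥ d ≤ β (v m) ⬝ᵥ d := fun m =>
    le_of_mul_le_mul_left (by linarith [hsub m, hbound m]) (hs m)
  obtain ⟨a, haK, σ, hσ, hlim⟩ := hK.tendsto_subseq hvK
  have hs0 : Tendsto (fun j => s (σ j)) atTop (𝓝 0) :=
    tendsto_one_div_add_atTop_nhds_zero_nat.comp hσ.tendsto_atTop
  have hβd : Tendsto (fun j => β (v (σ j)) ⬝ᵥ d) atTop (𝓝 (β a ⬝ᵥ d)) :=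
    ((hβ.dotProduct continuous_const).tendsto a).comp hlim
  have hval : Tendsto (fun j => α (v (σ j)) + x₀ ⬝ᵥ β (v (σ j))) atTop
      (𝓝 (α a + x₀ ⬝ᵥ β a)) :=
    ((hα.add (continuous_const.dotProduct hβ)).tendsto a).comp hlim
  have hupper := hval.add (hs0.mul (hβd.sub_const (u ⬝ᵥ d)))
  rw [zero_mul, add_zero] at hupper
  refine ⟨a, haK, le_antisymm ((hf x₀).2 ⟨a, haK, rfl⟩) ?_, ge_of_tendsto' hβd fun j => hdir (σ j)⟩
  exact ge_of_tendsto' hupper fun j => by linarith [hsub (σ j)]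

theorem subdiff_eq_convexHull_image_active [FirstCountableTopology X]
    (hK : IsCompact K) (hα : Continuous α) (hβ : Continuous β)
    (hf : ∀ x, IsGreatest ((fun v => α v + x ⬝ᵥ β v) '' K) (f x)) (x₀ : Fin t → ℝ) :
    subdiff f x₀ = convexHull ℝ (β '' {v ∈ K | α v + x₀ ⬝ᵥ β v = f x₀}) := by
  refine Subset.antisymm (fun u hu => ?_) (convexHull_min ?_ convex_subdiff)
  · have hactive : IsCompact {v ∈ K | α v + x₀ ⬝ᵥ β v = f x₀} :=
      hK.inter_right (isClosed_eq (hα.add (continuous_const.dotProduct hβ)) continuous_const)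
    refine mem_convexHull_of_forall_exists_le (hactive.image hβ) fun φ => ?_
    obtain ⟨v, hvK, hv, hle⟩ :=
      exists_mem_active_dotProduct_le_of_mem_subdiff hK hα hβ hf hu fun k => φ (Pi.single k 1)
    exact ⟨β v, ⟨v, ⟨hvK, hv⟩, rfl⟩, by simpa only [← strongDual_apply_eq_dotProduct] using hle⟩
  · rintro _ ⟨v, ⟨hvK, hv⟩, rfl⟩
    exact mem_subdiff_of_forall_le_of_eq (fun y => (hf y).2 ⟨v, hvK, rfl⟩) hv

end Danskin

namespace Module.End

section

variable {𝕜 E : Type*} [RCLike 𝕜] [AddCommGroup E] [Module 𝕜 E] [FiniteDimensional 𝕜 E]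

theorem finite_setOf_hasEigenvalue_ofReal (T : End 𝕜 E) :
    {r : ℝ | HasEigenvalue T r}.Finite :=
  (finite_hasEigenvalue T).preimage RCLike.ofReal_injective.injOn

theorem sInf_le_of_hasEigenvalue {T : End 𝕜 E} {r : ℝ} (hr : HasEigenvalue T r) :
    sInf {r : ℝ | HasEigenvalue T r} ≤ r :=
  csInf_le (finite_setOf_hasEigenvalue_ofReal T).bddBelow hr

end

theorem re_inner_apply_self_of_mem_eigenspace {𝕜 E : Type*} [RCLike 𝕜] [NormedAddCommGroup E]
    [InnerProductSpace 𝕜 E] {T : End 𝕜 E} {r : ℝ} {v : E} (hv : v ∈ eigenspace T r) :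
    RCLike.re ⟪T v, v⟫_𝕜 = r * ‖v‖ ^ 2 := by
  rw [mem_eigenspace_iff.1 hv, inner_smul_left, RCLike.conj_ofReal, inner_self_eq_norm_sq_to_K,
    ← RCLike.ofReal_pow, ← RCLike.ofReal_mul, RCLike.ofReal_re]

end Module.End

namespace LinearMap.IsSymmetric

variable {𝕜 E : Type*} [RCLike 𝕜] [NormedAddCommGroup E] [InnerProductSpace 𝕜 E]
  [FiniteDimensional 𝕜 E] {T : E →ₗ[𝕜] E}

theorem re_inner_apply_self_eq_sum (hT : T.IsSymmetric) {n : ℕ} (hn : Module.finrank 𝕜 E = n)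
    (v : E) :
    RCLike.re ⟪T v, v⟫_𝕜 = ∑ i, hT.eigenvalues hn i * ‖⟪hT.eigenvectorBasis hn i, v⟫_𝕜‖ ^ 2 := by
  set b := hT.eigenvectorBasis hn
  rw [← b.sum_inner_mul_inner, map_sum]
  refine Finset.sum_congr rfl fun i _ => ?_
  rw [hT, apply_eigenvectorBasis, inner_smul_right, ← inner_conj_symm, mul_assoc,
    RCLike.conj_mul, ← RCLike.ofReal_pow, ← RCLike.ofReal_mul, RCLike.ofReal_re]

theorem mul_norm_sq_le_re_inner_apply_self (hT : T.IsSymmetric) {μ : ℝ}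
    (hμ : ∀ r : ℝ, HasEigenvalue T r → μ ≤ r) (v : E) :
    μ * ‖v‖ ^ 2 ≤ RCLike.re ⟪T v, v⟫_𝕜 := by
  rw [hT.re_inner_apply_self_eq_sum rfl, ← (hT.eigenvectorBasis rfl).sum_sq_norm_inner_right v,
    Finset.mul_sum]
  exact Finset.sum_le_sum fun i _ =>
    mul_le_mul_of_nonneg_right (hμ _ (hT.hasEigenvalue_eigenvalues rfl i)) (by positivity)

theorem mem_eigenspace_of_re_inner_apply_self_eq (hT : T.IsSymmetric) {μ : ℝ}
    (hμ : ∀ r : ℝ, HasEigenvalue T r → μ ≤ r) {v : E}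
    (hv : RCLike.re ⟪T v, v⟫_𝕜 = μ * ‖v‖ ^ 2) : v ∈ eigenspace T μ := by
  set b := hT.eigenvectorBasis rfl
  set c := fun i => ⟪b i, v⟫_𝕜
  have hzero : ∑ i, (hT.eigenvalues rfl i - μ) * ‖c i‖ ^ 2 = 0 := by
    simp only [sub_mul, Finset.sum_sub_distrib, ← Finset.mul_sum, c, b.sum_sq_norm_inner_right]
    rw [← hT.re_inner_apply_self_eq_sum, hv, sub_self]
  have hterm := (Finset.sum_eq_zero_iff_of_nonneg fun i _ => mul_nonneg
    (sub_nonneg.2 (hμ _ (hT.hasEigenvalue_eigenvalues rfl i))) (by positivity)).1 hzero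
  rw [mem_eigenspace_iff, ← b.sum_repr' v, map_sum, Finset.smul_sum]
  refine Finset.sum_congr rfl fun i hi => ?_
  rw [map_smul, apply_eigenvectorBasis, smul_comm]
  rcases mul_eq_zero.1 (hterm i hi) with h | h
  · rw [sub_eq_zero.1 h]
  · simp [c, show c i = 0 by simpa using h]

theorem hasEigenvalue_sInf [Nontrivial E] (hT : T.IsSymmetric) :
    HasEigenvalue T (sInf {r : ℝ | HasEigenvalue T r} : ℝ) :=
  Set.Nonempty.csInf_mem ⟨_, hT.hasEigenvalue_eigenvalues rfl ⟨0, Module.finrank_pos⟩⟩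
    (finite_setOf_hasEigenvalue_ofReal T)

theorem isLeast_re_inner_apply_self_sphere [Nontrivial E] (hT : T.IsSymmetric) :
    IsLeast ((fun v => RCLike.re ⟪T v, v⟫_𝕜) '' Metric.sphere 0 1)
      (sInf {r : ℝ | HasEigenvalue T r}) := by
  refine ⟨?_, ?_⟩
  · obtain ⟨v, hv, hv0⟩ := hT.hasEigenvalue_sInf.exists_hasEigenvector
    refine ⟨(‖v‖⁻¹ : 𝕜) • v, by simp [norm_smul, hv0], ?_⟩
    beta_reduce
    rw [re_inner_apply_self_of_mem_eigenspace (Submodule.smul_mem _ _ hv)]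
    simp [norm_smul, hv0]
  · rintro _ ⟨v, hv, rfl⟩
    simpa [mem_sphere_zero_iff_norm.1 hv] using hT.mul_norm_sq_le_re_inner_apply_self
      (fun r hr => sInf_le_of_hasEigenvalue hr) v

theorem re_inner_apply_self_eq_sInf_iff (hT : T.IsSymmetric) {v : E} (hv : ‖v‖ = 1) :
    RCLike.re ⟪T v, v⟫_𝕜 = sInf {r : ℝ | HasEigenvalue T r} ↔
      v ∈ eigenspace T (sInf {r : ℝ | HasEigenvalue T r} : ℝ) := by
  refine ⟨fun h => hT.mem_eigenspace_of_re_inner_apply_self_eq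
    (fun r hr => sInf_le_of_hasEigenvalue hr) (by rw [h, hv, one_pow, mul_one]), fun h => ?_⟩
  rw [re_inner_apply_self_of_mem_eigenspace h, hv, one_pow, mul_one]

end LinearMap.IsSymmetric

namespace Matrix

variable {n t : ℕ}

theorem IsHermitian.add_sum_ofReal_smul {A₀ : Matrix (Fin n) (Fin n) ℂ} (hA₀ : A₀.IsHermitian)
    {B : Fin t → Matrix (Fin n) (Fin n) ℂ} (hB : ∀ k, (B k).IsHermitian) (x : Fin t → ℝ) :
    (A₀ + ∑ k, (x k : ℂ) • B k).IsHermitian :=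
  hA₀.add <| isHermitian_iff_isSelfAdjoint.2 <|
    isSelfAdjoint_sum _ fun k _ => (hB k).smul (Complex.conj_ofReal _)

theorem re_inner_toEuclideanLin_add_sum_smul (A₀ : Matrix (Fin n) (Fin n) ℂ)
    (B : Fin t → Matrix (Fin n) (Fin n) ℂ) (x : Fin t → ℝ) (v : EuclideanSpace ℂ (Fin n)) :
    RCLike.re ⟪toEuclideanLin (A₀ + ∑ k, (x k : ℂ) • B k) v, v⟫_ℂ =
      RCLike.re ⟪toEuclideanLin A₀ v, v⟫_ℂ + x ⬝ᵥ fun k => RCLike.re ⟪toEuclideanLin (B k) v, v⟫_ℂ := by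
  simp only [map_add, map_sum, map_smul, LinearMap.add_apply, LinearMap.sum_apply,
    LinearMap.smul_apply, inner_add_left, sum_inner, inner_smul_left, Complex.conj_ofReal,
    RCLike.re_to_complex, Complex.re_ofReal_mul, dotProduct]

namespace IsHermitian

variable {N : Matrix (Fin n) (Fin n) ℂ}

theorem isLeast_lambdaMin (hN : N.IsHermitian) (hn : 0 < n) :
    IsLeast ((fun v => RCLike.re ⟪toEuclideanLin N v, v⟫_ℂ) ''
      Metric.sphere (0 : EuclideanSpace ℂ (Fin n)) 1) (lambdaMin N) :=
  have : Nonempty (Fin n) := ⟨⟨0, hn⟩⟩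
  (isSymmetric_toEuclideanLin_iff.2 hN).isLeast_re_inner_apply_self_sphere

theorem re_inner_eq_lambdaMin_iff (hN : N.IsHermitian) {v : EuclideanSpace ℂ (Fin n)}
    (hv : ‖v‖ = 1) : RCLike.re ⟪toEuclideanLin N v, v⟫_ℂ = lambdaMin N ↔
      v ∈ eigenspace (toEuclideanLin N) (lambdaMin N : ℂ) :=
  (isSymmetric_toEuclideanLin_iff.2 hN).re_inner_apply_self_eq_sInf_iff hv

end IsHermitian

end Matrix

/-- The subdifferential of the convex function `x ↦ -λ_min(A₀ + ∑ x_k B_k)`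
at `x₀` equals the sign-reversed moment of the eigenspace of
`λ_min(A(x₀))`. -/
theorem subdiff_neg_lambdaMin_eq_neg_moment {n t : ℕ} (hn : 0 < n)
    (A₀ : Matrix (Fin n) (Fin n) ℂ) (hA₀ : A₀.IsHermitian)
    (B : Fin t → Matrix (Fin n) (Fin n) ℂ) (hB : ∀ k, (B k).IsHermitian)
    (x₀ : Fin t → ℝ)
    (A : (Fin t → ℝ) → Matrix (Fin n) (Fin n) ℂ)
    (hA : A = fun x => A₀ + ∑ k, ((x k : ℂ)) • B k)
    (Smin : Submodule ℂ (EuclideanSpace ℂ (Fin n)))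
    (hSmin : Smin = Module.End.eigenspace
      (Matrix.toEuclideanLin (A x₀)) ((lambdaMin (A x₀) : ℂ))) :
    subdiff (fun x => -(lambdaMin (A x))) x₀ =
      convexHull ℝ {w : Fin t → ℝ | ∃ v ∈ Smin, ‖v‖ = 1 ∧
        ∀ k, w k = -((inner ℂ (Matrix.toEuclideanLin (B k) v) v : ℂ).re)} := by
  have hAH : ∀ x, (A x).IsHermitian := fun x => hA ▸ hA₀.add_sum_ofReal_smul hB x
  have hq : ∀ x v, -RCLike.re ⟪toEuclideanLin (A x) v, v⟫_ℂ =
      -RCLike.re ⟪toEuclideanLin A₀ v, v⟫_ℂ +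
        x ⬝ᵥ -fun k => RCLike.re ⟪toEuclideanLin (B k) v, v⟫_ℂ := fun x v => by
    rw [hA, re_inner_toEuclideanLin_add_sum_smul, dotProduct_neg, neg_add]
  have hf : ∀ x, IsGreatest ((fun v => -RCLike.re ⟪toEuclideanLin A₀ v, v⟫_ℂ +
      x ⬝ᵥ -fun k => RCLike.re ⟪toEuclideanLin (B k) v, v⟫_ℂ) '' Metric.sphere 0 1)
      (-lambdaMin (A x)) := fun x => by
    simpa only [hq] using ((hAH x).isLeast_lambdaMin hn).isGreatest_neg_image
  rw [subdiff_eq_convexHull_image_active (isCompact_sphere 0 1) (by fun_prop) (by fun_prop) hf x₀]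
  congr 1
  ext w
  simp only [mem_image, mem_ofPred_eq, mem_sphere_zero_iff_norm, ← hq, neg_inj, hSmin]
  constructor
  · rintro ⟨v, ⟨hv1, hv⟩, rfl⟩
    exact ⟨v, ((hAH x₀).re_inner_eq_lambdaMin_iff hv1).1 hv, hv1, fun k => rfl⟩
  · rintro ⟨v, hvS, hv1, hw⟩
    exact ⟨v, ⟨hv1, ((hAH x₀).re_inner_eq_lambdaMin_iff hv1).2 hvS⟩, funext fun k => (hw k).symm⟩
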